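/- Let G be a group with subgroups B and N such that (B,N) is a BN-pair with Weyl group W = N/(B∩N). Then G admits the Bruhat decomposition: G is the disjoint union over w ∈ W of the double cosets BwB. -/

import Mathlib

variable {G : Type*} [Group G]

/-- The double coset `BwB ⊆ G` attached to an element `w` of the Weyl group
`W = N/(B ∩ N)` of a BN-pair `(B, N)` in `G`. -/
def bruhatCell (B N : Subgroup G) (w : N ⧸ (B ⊓ N).subgroupOf N) : Set G :=
  {g | ∃ (b₁ b₂ : B) (n : N),
    (QuotientGroup.mk n : N ⧸ (B ⊓ N).subgroupOf N) = w ∧ g = b₁ * n * b₂}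

/-!
The cells `BwB` are double cosets of `B`, so two of them are equal or disjoint. Axiom (BN1) and
induction on a word for `u` show that a product of an element of `BuB` and one of `BwB` lies in
some cell; since `B` and `N` lie in cells and generate `G`, the cells cover `G`.
For injectivity of `w ↦ BwB`, suppose `BwB = Bw'B` with `ℓ(w) ≤ ℓ(w')` and write `w = sv` with
`ℓ(v) < ℓ(w)`. Then `BvB` meets `BsB·Bw'B ⊆ Bsw'B ∪ Bw'B`, so by induction `v = sw'` (whence
`w = w'`) or `v = w'`, which the lengths exclude.
-/

open DoubleCoset QuotientGroup

section WordLength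

variable {M : Type*} [Monoid M]

-- `sInf ∅ = 0` is the junk value when `w` is not a product of elements of `S`.
noncomputable def wordLength (S : Set M) (w : M) : ℕ :=
  sInf {n | ∃ l : List M, l.length = n ∧ (∀ x ∈ l, x ∈ S) ∧ l.prod = w}

variable {S : Set M}

lemma wordLength_prod_le {l : List M} (hl : ∀ x ∈ l, x ∈ S) : wordLength S l.prod ≤ l.length :=
  Nat.sInf_le ⟨l, rfl, hl, rfl⟩

lemma exists_list_length_eq_wordLength {w : M} (hw : w ∈ Submonoid.closure S) :
    ∃ l : List M, l.length = wordLength S w ∧ (∀ x ∈ l, x ∈ S) ∧ l.prod = w := by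
  obtain ⟨l, hl, hprod⟩ := Submonoid.exists_list_of_mem_closure hw
  exact Nat.sInf_mem (s := {n | ∃ l : List M, l.length = n ∧ (∀ x ∈ l, x ∈ S) ∧ l.prod = w})
    ⟨l.length, l, rfl, hl, hprod⟩

lemma eq_one_or_exists_mul_wordLength_lt {w : M} (hw : w ∈ Submonoid.closure S) :
    w = 1 ∨ ∃ s ∈ S, ∃ v, w = s * v ∧ wordLength S v < wordLength S w := by
  obtain ⟨_ | ⟨s, l⟩, hlen, hl, rfl⟩ := exists_list_length_eq_wordLength hw
  · exact .inl rfl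
  · have hv := wordLength_prod_le fun x hx => hl x (List.mem_cons_of_mem s hx)
    rw [List.length_cons] at hlen
    exact .inr ⟨s, hl s List.mem_cons_self, l.prod, List.prod_cons, by omega⟩

end WordLength

lemma Subgroup.closure_toSubmonoid_of_mul_self_eq_one {H : Type*} [Group H] {S : Set H}
    (hS : ∀ s ∈ S, s * s = 1) : (Subgroup.closure S).toSubmonoid = Submonoid.closure S := by
  have hinv : S⁻¹ ⊆ S := Set.inv_subset.2 fun s hs => by
    rwa [Set.mem_inv, inv_eq_of_mul_eq_one_right (hS s hs)]
  rw [Subgroup.closure_toSubmonoid, Set.union_eq_left.2 hinv]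

section BruhatCell

variable {B N : Subgroup G}

local notation "W" => N ⧸ Subgroup.subgroupOf (B ⊓ N) N

lemma bruhatCell_mk (n : N) : bruhatCell B N (n : W) = doubleCoset (n : G) B B := by
  ext g
  constructor
  · rintro ⟨b₁, b₂, m, hm, rfl⟩
    have ht : ((n⁻¹ * m : N) : G) ∈ B := (Subgroup.mem_subgroupOf.1 (QuotientGroup.eq.1 hm.symm)).1
    refine mem_doubleCoset.2 ⟨b₁, b₁.2, _, mul_mem ht b₂.2, ?_⟩
    push_cast
    group
  · intro hg
    obtain ⟨x, hx, y, hy, rfl⟩ := mem_doubleCoset.1 hg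
    exact ⟨⟨x, hx⟩, ⟨y, hy⟩, n, rfl, rfl⟩

lemma mem_bruhatCell_mk (n : N) : (n : G) ∈ bruhatCell B N (n : W) := by
  rw [bruhatCell_mk]
  exact mem_doubleCoset_self _ _ _

lemma bruhatCell_eq_of_nonempty_inter {w w' : W}
    (h : (bruhatCell B N w ∩ bruhatCell B N w').Nonempty) :
    bruhatCell B N w = bruhatCell B N w' := by
  induction w using QuotientGroup.induction_on
  induction w' using QuotientGroup.induction_on
  rw [bruhatCell_mk, bruhatCell_mk] at h ⊢
  exact eq_of_not_disjoint (Set.not_disjoint_iff_nonempty_inter.2 h)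

lemma mul_mem_bruhatCell {b x : G} {w : W} (hb : b ∈ B) (hx : x ∈ bruhatCell B N w) :
    b * x ∈ bruhatCell B N w := by
  obtain ⟨b₁, b₂, n, hn, rfl⟩ := hx
  exact ⟨⟨b, hb⟩ * b₁, b₂, n, hn, by simp [mul_assoc]⟩

variable [((B ⊓ N).subgroupOf N).Normal]

lemma mk_eq_one_iff (n : N) : (n : W) = 1 ↔ (n : G) ∈ B := by
  rw [QuotientGroup.eq_one_iff, Subgroup.mem_subgroupOf, Subgroup.mem_inf]
  exact and_iff_left n.2

lemma mem_bruhatCell_one {x : G} : x ∈ bruhatCell B N 1 ↔ x ∈ B := by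
  rw [← QuotientGroup.mk_one, bruhatCell_mk, mem_doubleCoset]
  refine ⟨?_, fun hx => ⟨x, hx, 1, one_mem B, by simp⟩⟩
  rintro ⟨a, ha, b, hb, rfl⟩
  simpa using mul_mem ha hb

lemma exists_mul_eq_of_mem_bruhatCell_mul {s v : W} {x : G}
    (hx : x ∈ bruhatCell B N (s * v)) :
    ∃ a ∈ bruhatCell B N s, ∃ c ∈ bruhatCell B N v, a * c = x := by
  induction s using QuotientGroup.induction_on with | H ns =>
  induction v using QuotientGroup.induction_on with | H nv =>
  rw [← QuotientGroup.mk_mul, bruhatCell_mk] at hx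
  obtain ⟨b₁, hb₁, b₂, hb₂, rfl⟩ := mem_doubleCoset.1 hx
  refine ⟨b₁ * ns, ?_, nv * b₂, ?_, by push_cast; group⟩
  · rw [bruhatCell_mk]
    exact mem_doubleCoset.2 ⟨b₁, hb₁, 1, one_mem B, by simp⟩
  · rw [bruhatCell_mk]
    exact mem_doubleCoset.2 ⟨1, one_mem B, b₂, hb₂, by simp⟩

lemma exists_mul_mem_bruhatCell {S : Set W} (hS : Submonoid.closure S = ⊤)
    (hBN1 : ∀ s ∈ S, ∀ w, ∀ g ∈ bruhatCell B N s, ∀ h ∈ bruhatCell B N w,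
      g * h ∈ bruhatCell B N (s * w) ∪ bruhatCell B N w)
    {u w : W} {x y : G} (hx : x ∈ bruhatCell B N u) (hy : y ∈ bruhatCell B N w) :
    ∃ v, x * y ∈ bruhatCell B N v := by
  induction hS.ge (Submonoid.mem_top u)
    using Submonoid.closure_induction_left generalizing x with
  | one => exact ⟨w, mul_mem_bruhatCell (mem_bruhatCell_one.1 hx) hy⟩
  | mul_left s hs u _ ih =>
    obtain ⟨a, ha, c, hc, rfl⟩ := exists_mul_eq_of_mem_bruhatCell_mul hx
    obtain ⟨v, hv⟩ := ih hc
    rw [mul_assoc]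
    exact (hBN1 s hs v a ha _ hv).elim (⟨_, ·⟩) (⟨_, ·⟩)

theorem iUnion_bruhatCell_eq_univ {S : Set W}
    (hgen : Subgroup.closure ((B : Set G) ∪ (N : Set G)) = ⊤) (hS : Submonoid.closure S = ⊤)
    (hBN1 : ∀ s ∈ S, ∀ w, ∀ g ∈ bruhatCell B N s, ∀ h ∈ bruhatCell B N w,
      g * h ∈ bruhatCell B N (s * w) ∪ bruhatCell B N w) :
    ⋃ w, bruhatCell B N w = Set.univ := by
  have exists_mem_bruhatCell : ∀ x, x ∈ B ∨ x ∈ N → ∃ u, x ∈ bruhatCell B N u := by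
    rintro x (hx | hx)
    exacts [⟨1, mem_bruhatCell_one.2 hx⟩, ⟨_, mem_bruhatCell_mk ⟨x, hx⟩⟩]
  refine Set.eq_univ_of_forall fun g => Set.mem_iUnion.2 ?_
  induction hgen.ge (Subgroup.mem_top g) using Subgroup.closure_induction_left with
  | one => exact ⟨1, mem_bruhatCell_one.2 (one_mem B)⟩
  | mul_left x hx y _ ih =>
    obtain ⟨u, hu⟩ := exists_mem_bruhatCell x hx
    obtain ⟨w, hw⟩ := ih
    exact exists_mul_mem_bruhatCell hS hBN1 hu hw
  | inv_mul_cancel x hx y _ ih =>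
    obtain ⟨u, hu⟩ := exists_mem_bruhatCell x⁻¹ (hx.imp B.inv_mem N.inv_mem)
    obtain ⟨w, hw⟩ := ih
    exact exists_mul_mem_bruhatCell hS hBN1 hu hw

theorem eq_of_bruhatCell_eq {S : Set W} (hS : Submonoid.closure S = ⊤)
    (hSinv : ∀ s ∈ S, s * s = 1)
    (hBN1 : ∀ s ∈ S, ∀ w, ∀ g ∈ bruhatCell B N s, ∀ h ∈ bruhatCell B N w,
      g * h ∈ bruhatCell B N (s * w) ∪ bruhatCell B N w)
    {w w' : W} (h : bruhatCell B N w = bruhatCell B N w') : w = w' := by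
  induction hk : min (wordLength S w) (wordLength S w') using Nat.strong_induction_on
    generalizing w w' with
  | _ k ih =>
  wlog hle : wordLength S w ≤ wordLength S w' generalizing w w'
  · exact (this h.symm (by rw [min_comm, hk]) (le_of_not_ge hle)).symm
  rw [min_eq_left hle] at hk
  subst hk
  rcases eq_one_or_exists_mul_wordLength_lt (hS.ge (Submonoid.mem_top w)) with
    rfl | ⟨s, hs, v, rfl, hv⟩
  · obtain ⟨n', rfl⟩ := mk_surjective w'
    exact ((mk_eq_one_iff n').2 (mem_bruhatCell_one.1 (h ▸ mem_bruhatCell_mk n'))).symm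
  · have ih_v : ∀ u, bruhatCell B N v = bruhatCell B N u → v = u := fun u hu =>
      ih _ ((min_le_left _ _).trans_lt hv) hu rfl
    obtain ⟨ns, rfl⟩ := mk_surjective s
    obtain ⟨nw, hnw⟩ := mk_surjective (ns * v : W)
    have hsv : ((ns * nw : N) : W) = v := by
      rw [QuotientGroup.mk_mul, hnw, ← mul_assoc, hSinv _ hs, one_mul]
    have hv_mem : (ns : G) * nw ∈ bruhatCell B N v := hsv ▸ mem_bruhatCell_mk (ns * nw)
    have hw'_mem : (nw : G) ∈ bruhatCell B N w' := h ▸ hnw ▸ mem_bruhatCell_mk nw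
    rcases hBN1 _ hs w' _ (mem_bruhatCell_mk ns) _ hw'_mem with h' | h'
    · rw [ih_v _ (bruhatCell_eq_of_nonempty_inter ⟨_, hv_mem, h'⟩), ← mul_assoc, hSinv _ hs,
        one_mul]
    · rw [← ih_v _ (bruhatCell_eq_of_nonempty_inter ⟨_, hv_mem, h'⟩)] at hle
      omega

end BruhatCell

theorem stmt_17_general (B N : Subgroup G) [((B ⊓ N).subgroupOf N).Normal]
    (S : Set (N ⧸ (B ⊓ N).subgroupOf N))
    -- `B` and `N` generate `G` :
    (hgen : Subgroup.closure ((B : Set G) ∪ (N : Set G)) = ⊤)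
    -- `W` is generated by the set `S` of involutions :
    (hSgen : Subgroup.closure S = ⊤)
    (hSinv : ∀ s ∈ S, s * s = 1 ∧ s ≠ 1)
    -- axiom (BN1): `BsB·BwB ⊆ BswB ∪ BwB` :
    (hBN1 : ∀ s ∈ S, ∀ w, ∀ g ∈ bruhatCell B N s, ∀ h ∈ bruhatCell B N w,
      g * h ∈ bruhatCell B N (s * w) ∪ bruhatCell B N w) :
    (⋃ w, bruhatCell B N w) = Set.univ ∧
    ∀ w w', (bruhatCell B N w ∩ bruhatCell B N w').Nonempty → w = w' := by
  have hsq : ∀ s ∈ S, s * s = 1 := fun s hs => (hSinv s hs).1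
  have hS : Submonoid.closure S = ⊤ := by
    rw [← Subgroup.closure_toSubmonoid_of_mul_self_eq_one hsq, hSgen, Subgroup.top_toSubmonoid]
  exact ⟨iUnion_bruhatCell_eq_univ hgen hS hBN1, fun w w' h =>
    eq_of_bruhatCell_eq hS hsq hBN1 (bruhatCell_eq_of_nonempty_inter h)⟩

/-- Let `G` be a group with subgroups `B` and `N` forming a BN-pair, with
Weyl group `W = N/(B ∩ N)` generated by a set `S` of involutions, satisfying the Tits
system axioms (`B, N` generate `G`, `T = B ∩ N` is normal in `N`,
`BsB·BwB ⊆ BswB ∪ BwB` and `sBs ≠ B` for `s ∈ S`). Then `G` admits the Bruhat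
decomposition: `G` is the disjoint union over `w ∈ W` of the double cosets `BwB`. -/
theorem stmt_17 (B N : Subgroup G) [((B ⊓ N).subgroupOf N).Normal]
    (S : Set (N ⧸ (B ⊓ N).subgroupOf N))
    -- `B` and `N` generate `G` :
    (hgen : Subgroup.closure ((B : Set G) ∪ (N : Set G)) = ⊤)
    -- `W` is generated by the set `S` of involutions :
    (hSgen : Subgroup.closure S = ⊤)
    (hSinv : ∀ s ∈ S, s * s = 1 ∧ s ≠ 1)
    -- axiom (BN1): `BsB·BwB ⊆ BswB ∪ BwB` :
    (hBN1 : ∀ s ∈ S, ∀ w, ∀ g ∈ bruhatCell B N s, ∀ h ∈ bruhatCell B N w,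
      g * h ∈ bruhatCell B N (s * w) ∪ bruhatCell B N w)
    -- axiom (BN2): `sBs ≰ B` for `s ∈ S` :
    (hBN2 : ∀ n : N, (QuotientGroup.mk n : N ⧸ (B ⊓ N).subgroupOf N) ∈ S →
      ∃ b : B, (n : G) * b * (n : G)⁻¹ ∉ B) :
    (⋃ w, bruhatCell B N w) = Set.univ ∧
    ∀ w w', (bruhatCell B N w ∩ bruhatCell B N w').Nonempty → w = w' :=
  stmt_17_general B N S hgen hSgen hSinv hBN1
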